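/- For a single-qubit depolarizing channel with depolarizing probability p ∈ [0,1], the entanglement-assisted symbol-based classical capacity C_{E,s}(p) = 2 + (1-p)·log₂(1-p) + p·log₂(p/3) is greater than or equal to the bit-based capacity C_{E,b}(p) = 2 + (2 - 4p/3)·log₂(1 - 2p/3) + (4p/3)·log₂(2p/3), with equality iff p = 0 or p = 3/4. -/

import Mathlib

noncomputable def CEs (p : ℝ) : ℝ :=
  2 + (1 - p) * Real.logb 2 (1 - p) + p * Real.logb 2 (p / 3)

noncomputable def CEb (p : ℝ) : ℝ :=
  2 + (2 - 4 * p / 3) * Real.logb 2 (1 - 2 * p / 3) + (4 * p / 3) * Real.logb 2 (2 * p / 3)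

/-!
Up to the factor `log 2`, `C_{E,s}(p) - C_{E,b}(p)` is the Kullback–Leibler divergence of the
two-bit symbol distribution `(1 - p, p/3, p/3, p/3)` from the product of its two marginals, each of
which flips its bit with probability `2p/3`. Gibbs' inequality gives `C_{E,b} ≤ C_{E,s}`, with
equality iff the symbol distribution is that product; comparing the probabilities of a double flip,
`p/3 = (2p/3)²`, this happens iff `p = 0` or `p = 3/4`.
-/

open Real InformationTheory

lemma mul_klFun_div {x y : ℝ} (hy : y ≠ 0) :
    y * klFun (x / y) = x * (log x - log y) + y - x := by
  rcases eq_or_ne x 0 with rfl | hx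
  · simp [klFun]
  · rw [klFun, log_div hx hy]
    field_simp

lemma mul_klFun_div_nonneg {x y : ℝ} (hx : 0 ≤ x) (hy : 0 < y) : 0 ≤ y * klFun (x / y) :=
  mul_nonneg hy.le (klFun_nonneg (div_nonneg hx hy.le))

lemma mul_klFun_div_eq_zero_iff {x y : ℝ} (hx : 0 ≤ x) (hy : 0 < y) :
    y * klFun (x / y) = 0 ↔ x = y := by
  rw [mul_eq_zero, klFun_eq_zero_iff (div_nonneg hx hy.le), div_eq_one_iff_eq hy.ne']
  simp [hy.ne']

lemma CEs_zero_eq_CEb_zero : CEs 0 = CEb 0 := by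
  simp [CEs, CEb]

lemma CEs_sub_CEb_mul_log_two {p : ℝ} (hp0 : 0 < p) (hp : p < 3 / 2) :
    (CEs p - CEb p) * log 2 =
      (1 - 2 * p / 3) ^ 2 * klFun ((1 - p) / (1 - 2 * p / 3) ^ 2)
      + 2 * ((1 - 2 * p / 3) * (2 * p / 3) * klFun (p / 3 / ((1 - 2 * p / 3) * (2 * p / 3))))
      + (2 * p / 3) ^ 2 * klFun (p / 3 / (2 * p / 3) ^ 2) := by
  have ha : 1 - 2 * p / 3 ≠ 0 := by linarith
  have hb : 2 * p / 3 ≠ 0 := by positivity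
  rw [mul_klFun_div (pow_ne_zero 2 ha), mul_klFun_div (mul_ne_zero ha hb),
    mul_klFun_div (pow_ne_zero 2 hb), log_pow, log_pow, log_mul ha hb]
  simp only [CEs, CEb, logb]
  field_simp
  ring

lemma CEb_le_CEs {p : ℝ} (hp0 : 0 ≤ p) (hp1 : p ≤ 1) : CEb p ≤ CEs p := by
  rcases hp0.eq_or_lt with rfl | hp0
  · exact CEs_zero_eq_CEb_zero.ge
  have ha : 0 < 1 - 2 * p / 3 := by linarith
  have hb : 0 < 2 * p / 3 := by positivity
  have hgap : 0 ≤ (CEs p - CEb p) * log 2 := by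
    rw [CEs_sub_CEb_mul_log_two hp0 (by linarith)]
    have := mul_klFun_div_nonneg (x := 1 - p) (by linarith) (pow_pos ha 2)
    have := mul_klFun_div_nonneg (x := p / 3) (by positivity) (mul_pos ha hb)
    have := mul_klFun_div_nonneg (x := p / 3) (by positivity) (pow_pos hb 2)
    positivity
  have := nonneg_of_mul_nonneg_left hgap (log_pos one_lt_two)
  linarith

lemma CEs_eq_CEb_iff_of_pos {p : ℝ} (hp0 : 0 < p) (hp1 : p ≤ 1) :
    CEs p = CEb p ↔ p = 3 / 4 := by
  have ha : 0 < 1 - 2 * p / 3 := by linarith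
  have hb : 0 < 2 * p / 3 := by positivity
  have h₁ := mul_klFun_div_nonneg (x := 1 - p) (by linarith) (pow_pos ha 2)
  have h₂ := mul_klFun_div_nonneg (x := p / 3) (by positivity) (mul_pos ha hb)
  have h₃ := mul_klFun_div_nonneg (x := p / 3) (by positivity) (pow_pos hb 2)
  rw [← sub_eq_zero, ← mul_eq_zero_iff_right (log_pos one_lt_two).ne',
    CEs_sub_CEb_mul_log_two hp0 (by linarith),
    add_eq_zero_iff_of_nonneg (by positivity) h₃, add_eq_zero_iff_of_nonneg h₁ (by positivity),
    mul_eq_zero_iff_left two_ne_zero,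
    mul_klFun_div_eq_zero_iff (by linarith) (pow_pos ha 2),
    mul_klFun_div_eq_zero_iff (by positivity) (mul_pos ha hb),
    mul_klFun_div_eq_zero_iff (by positivity) (pow_pos hb 2)]
  constructor
  · rintro ⟨-, hdouble⟩
    nlinarith
  · rintro rfl
    norm_num

theorem stmt_0 (p : ℝ) (hp0 : 0 ≤ p) (hp1 : p ≤ 1) :
    CEb p ≤ CEs p ∧ (CEs p = CEb p ↔ p = 0 ∨ p = 3 / 4) := by
  refine ⟨CEb_le_CEs hp0 hp1, ?_⟩
  rcases hp0.eq_or_lt with rfl | hp0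
  · simp [CEs_zero_eq_CEb_zero]
  · rw [CEs_eq_CEb_iff_of_pos hp0 hp1, or_iff_right hp0.ne']
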